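/- arXiv:0704.1690 — 3 statements merged into one kernel-verified Lean document; each statement's English description precedes it below -/
import Mathlib

section
/- Let g_1,...,g_k be homogeneous polynomials of degrees d_i ≥ 1 in C[z_1,...,z_n], and let S be the space of polynomial solutions u ∈ C[z_1,...,z_n] of the system g_i(D)u = 0 for all i. Then S is finite-dimensional over C if and only if the g_i have no common zero in C^n other than the origin. -/
/-!
If the `g_i` have only the trivial common zero, the Nullstellensatz puts a power `z_j ^ N` of
every variable into the ideal they generate. Since `f ↦ f(D)` is a ring homomorphism, every
solution is then killed by all `∂_j ^ N`, so its degree in each variable is below `N`.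

Conversely, for a nonzero common zero `w`, the function `exp ⟨w, z⟩` satisfies
`g(D) exp ⟨w, z⟩ = g(w) exp ⟨w, z⟩`. For homogeneous `g` of degree `d` this means that `g(D)`
maps the degree-`(m + d)` part of the exponential to `g(w)` times its degree-`m` part, so all
homogeneous parts of high degree are solutions, of unbounded degree.
-/

open MvPolynomial

/-- The iterated partial derivative `∂^{|s|}/∂z^s` as a linear endomorphism. -/
noncomputable def mderivL {n : ℕ} (s : Fin n → ℕ) : Module.End ℂ (MvPolynomial (Fin n) ℂ) :=
  (List.finRange n).foldr
    (fun i acc => ((MvPolynomial.pderiv (R := ℂ) i).toLinearMap) ^ (s i) * acc) 1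

/-- The differential operator `f(D)` (substitute `∂/∂z_i` for `z_i` in `f`) as a linear
endomorphism of the polynomial ring. -/
noncomputable def applyDL {n : ℕ} (f : MvPolynomial (Fin n) ℂ) :
    Module.End ℂ (MvPolynomial (Fin n) ℂ) :=
  (AddMonoidAlgebra.coeff f).sum fun s c => c • mderivL (fun i => s i)

theorem List.prod_map_pow_add_of_commute {ι M : Type*} [Monoid M] {f : ι → M}
    (hf : ∀ i j, Commute (f i) (f j)) (l : List ι) (s t : ι → ℕ) :
    (l.map fun i => f i ^ (s i + t i)).prod =
      (l.map fun i => f i ^ s i).prod * (l.map fun i => f i ^ t i).prod := by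
  induction l with
  | nil => simp
  | cons i l ih =>
    have hcomm : Commute (f i ^ t i) (l.map fun j => f j ^ s j).prod :=
      Commute.list_prod_right _ _ <| by
        simpa using fun j _ => (hf i j).pow_pow (t i) (s j)
    simp only [List.map_cons, List.prod_cons]
    rw [ih, pow_add, mul_assoc, mul_assoc, hcomm.left_comm]

namespace MvPolynomial

theorem pderiv_pderiv_comm {σ R : Type*} [CommRing R] (i j : σ) (f : MvPolynomial σ R) :
    pderiv i (pderiv j f) = pderiv j (pderiv i f) := by
  have hbracket : ⁅pderiv i, pderiv j⁆ = (0 : Derivation R (MvPolynomial σ R) _) :=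
    derivation_ext fun k => by
      classical
      rw [Derivation.commutator_apply, pderiv_X, pderiv_X]
      simp only [Pi.single_apply]
      split_ifs <;> simp
  have := congr($hbracket f)
  rw [Derivation.commutator_apply] at this
  simpa [sub_eq_zero] using this

section PderivIterate

variable {σ R : Type*} [CommSemiring R] [NoZeroDivisors R] [CharZero R]

theorem coeff_eq_zero_of_pderiv_iterate_eq_zero {i : σ} {N : ℕ} {u : MvPolynomial σ R}
    (hu : (pderiv i)^[N] u = 0) {t : σ →₀ ℕ} (ht : N ≤ t i) : coeff t u = 0 := by
  induction N generalizing u t with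
  | zero => simp_all
  | succ N ih =>
    have hti : t i ≠ 0 := by omega
    have key := ih (u := pderiv i u) hu (t := t - Finsupp.single i 1) (by simp; omega)
    rw [coeff_pderiv, Finsupp.sub_add_single_one_cancel hti] at key
    exact (mul_eq_zero.mp key).resolve_right (Nat.cast_add_one_ne_zero _)

theorem mem_restrictDegree_of_pderiv_iterate_eq_zero {N : ℕ} {u : MvPolynomial σ R}
    (hu : ∀ i, (pderiv i)^[N] u = 0) : u ∈ restrictDegree σ R N := by
  rw [mem_restrictDegree]
  intro t ht i
  by_contra! hlt
  exact mem_support_iff.mp ht (coeff_eq_zero_of_pderiv_iterate_eq_zero (hu i) hlt.le)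

end PderivIterate

theorem exists_le_restrictTotalDegree_of_fg {σ R : Type*} [CommSemiring R]
    {S : Submodule R (MvPolynomial σ R)} (hS : S.FG) :
    ∃ B, S ≤ restrictTotalDegree σ R B := by
  obtain ⟨t, rfl⟩ := hS
  refine ⟨t.sup totalDegree, Submodule.span_le.mpr fun p hp => ?_⟩
  exact (mem_restrictTotalDegree _ _ _).mpr (Finset.le_sup hp)

theorem exists_X_pow_mem_span_of_no_common_zero {σ ι K : Type*} [Finite σ] [Field K]
    [IsAlgClosed K] {g : ι → MvPolynomial σ K}
    (hg : ∀ w : σ → K, (∀ i, eval w (g i) = 0) → w = 0) :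
    ∃ N, ∀ j, X j ^ N ∈ Ideal.span (Set.range g) := by
  have hrad : ∀ j, X j ∈ (Ideal.span (Set.range g)).radical := fun j => by
    rw [← vanishingIdeal_zeroLocus_eq_radical (K := K), mem_vanishingIdeal_iff]
    intro w hw
    rw [hg w fun i => hw (g i) (Ideal.subset_span ⟨i, rfl⟩)]
    simp
  choose N hN using hrad
  have := Fintype.ofFinite σ
  exact ⟨Finset.univ.sup N, fun j =>
    Ideal.pow_mem_of_pow_mem _ (hN j) (Finset.le_sup (Finset.mem_univ j))⟩

section ExpTerm

variable {σ K : Type*} [Fintype σ] [Field K]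

noncomputable def linearForm (w : σ → K) : MvPolynomial σ K := ∑ i, C (w i) * X i

/-- The degree-`m` part of `exp ⟨w, z⟩`. -/
noncomputable def expTerm (w : σ → K) (m : ℕ) : MvPolynomial σ K :=
  (m.factorial : K)⁻¹ • linearForm w ^ m

theorem pderiv_linearForm (w : σ → K) (i : σ) : pderiv i (linearForm w) = C (w i) := by
  classical simp [linearForm, Pi.single_apply]

theorem isHomogeneous_expTerm (w : σ → K) (m : ℕ) : (expTerm w m).IsHomogeneous m := by
  have hL : (linearForm w).IsHomogeneous 1 :=
    IsHomogeneous.sum _ _ _ fun i _ => isHomogeneous_C_mul_X (w i) i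
  rw [expTerm, smul_eq_C_mul]
  simpa using (hL.pow m).C_mul _

variable [CharZero K]

theorem pderiv_expTerm_succ (w : σ → K) (i : σ) (m : ℕ) :
    pderiv i (expTerm w (m + 1)) = w i • expTerm w m := by
  have hfact : ((m + 1).factorial : K)⁻¹ * (m + 1 : ℕ) = (m.factorial : K)⁻¹ := by
    rw [Nat.factorial_succ]
    push_cast
    field_simp
  rw [expTerm, expTerm, (pderiv i).map_smul, pderiv_pow, pderiv_linearForm, Nat.add_sub_cancel,
    ← map_natCast C, smul_smul, ← hfact]
  simp only [smul_eq_C_mul, map_mul]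
  ring

theorem pderiv_iterate_expTerm (w : σ → K) (i : σ) (m b : ℕ) :
    (pderiv i)^[b] (expTerm w (m + b)) = w i ^ b • expTerm w m := by
  induction b generalizing m with
  | zero => simp
  | succ b ih =>
    rw [Function.iterate_succ_apply', ← add_assoc, add_right_comm, ih, (pderiv i).map_smul,
      pderiv_expTerm_succ, smul_smul, pow_succ]

theorem expTerm_ne_zero {w : σ → K} (hw : w ≠ 0) (m : ℕ) : expTerm w m ≠ 0 := by
  obtain ⟨j, hj⟩ := Function.ne_iff.mp hw
  induction m with
  | zero => simp [expTerm]
  | succ m ih =>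
    intro h
    have := pderiv_expTerm_succ w j m
    rw [h, map_zero, eq_comm, smul_eq_zero] at this
    exact this.elim hj ih

theorem totalDegree_expTerm {w : σ → K} (hw : w ≠ 0) (m : ℕ) : (expTerm w m).totalDegree = m :=
  (isHomogeneous_expTerm w m).totalDegree (expTerm_ne_zero hw m)

end ExpTerm

end MvPolynomial

section DifferentialOperators

variable {n : ℕ}

theorem mderivL_eq_prod (s : Fin n → ℕ) :
    mderivL s = ((List.finRange n).map fun i => (pderiv i).toLinearMap ^ s i).prod := by
  rw [mderivL, List.prod, List.foldr_map]

theorem mderivL_add (s t : Fin n → ℕ) : mderivL (s + t) = mderivL s * mderivL t := by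
  simp only [mderivL_eq_prod, Pi.add_apply]
  exact List.prod_map_pow_add_of_commute
    (fun i j => LinearMap.ext (pderiv_pderiv_comm i j)) _ s t

theorem mderivL_zero : mderivL (0 : Fin n → ℕ) = 1 := by
  simp [mderivL_eq_prod]

theorem mderivL_single (i : Fin n) (b : ℕ) :
    mderivL (Pi.single i b) = (pderiv i).toLinearMap ^ b := by
  rw [mderivL_eq_prod, List.prod_map_eq_pow_single i, List.count_finRange, pow_one,
    Pi.single_eq_same]
  intro j hj _
  rw [Pi.single_eq_of_ne hj, pow_zero]

theorem applyDL_monomial (s : Fin n →₀ ℕ) (c : ℂ) : applyDL (monomial s c) = c • mderivL s :=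
  sum_monomial_eq (zero_smul _ _)

theorem applyDL_add (f g : MvPolynomial (Fin n) ℂ) : applyDL (f + g) = applyDL f + applyDL g :=
  Finsupp.sum_add_index' (fun _ => zero_smul _ _) fun _ _ _ => add_smul _ _ _

theorem applyDL_smul (c : ℂ) (f : MvPolynomial (Fin n) ℂ) : applyDL (c • f) = c • applyDL f := by
  induction f using MvPolynomial.induction_on' with
  | add p q hp hq => rw [smul_add, applyDL_add, applyDL_add, hp, hq, smul_add]
  | monomial s a => rw [smul_monomial, applyDL_monomial, applyDL_monomial, smul_smul, smul_eq_mul]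

theorem applyDL_one : applyDL (1 : MvPolynomial (Fin n) ℂ) = 1 := by
  rw [← C_1, ← monomial_zero', applyDL_monomial, one_smul]
  exact mderivL_zero

theorem applyDL_mul (f g : MvPolynomial (Fin n) ℂ) : applyDL (f * g) = applyDL f * applyDL g := by
  induction f using MvPolynomial.induction_on' with
  | add p q hp hq => rw [add_mul, applyDL_add, applyDL_add, hp, hq, add_mul]
  | monomial s c =>
    induction g using MvPolynomial.induction_on' with
    | add p q hp hq => rw [mul_add, applyDL_add, applyDL_add, hp, hq, mul_add]
    | monomial t a =>
      rw [monomial_mul, applyDL_monomial, applyDL_monomial, applyDL_monomial, Finsupp.coe_add,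
        mderivL_add, smul_mul_smul_comm]

noncomputable def applyDLAlgHom :
    MvPolynomial (Fin n) ℂ →ₐ[ℂ] Module.End ℂ (MvPolynomial (Fin n) ℂ) :=
  AlgHom.ofLinearMap ⟨⟨applyDL, applyDL_add⟩, applyDL_smul⟩ applyDL_one applyDL_mul

theorem applyDLAlgHom_apply (f : MvPolynomial (Fin n) ℂ) : applyDLAlgHom f = applyDL f := rfl

theorem applyDL_X (i : Fin n) : applyDL (X i) = (pderiv i).toLinearMap := by
  rw [X, applyDL_monomial, one_smul, Finsupp.single_eq_pi_single, mderivL_single, pow_one]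

theorem applyDL_X_pow (i : Fin n) (N : ℕ) : applyDL (X i ^ N) = (pderiv i).toLinearMap ^ N := by
  rw [← applyDLAlgHom_apply, map_pow, applyDLAlgHom_apply, applyDL_X]

theorem applyDL_monomial_expTerm (w : Fin n → ℂ) (s : Fin n →₀ ℕ) (c : ℂ) (m : ℕ) :
    applyDL (monomial s c) (expTerm w (m + s.degree)) = eval w (monomial s c) • expTerm w m := by
  induction s using Finsupp.induction generalizing m with
  | zero =>
    rw [applyDL_monomial, Finsupp.coe_zero, mderivL_zero, map_zero, add_zero, eval_monomial]
    simp
  | single_add a b f _ _ ih =>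
    rw [monomial_single_add, applyDL_mul, Module.End.mul_apply, map_add, Finsupp.degree_single,
      ← add_assoc, ih, map_smul, applyDL_X_pow, Module.End.pow_apply, Derivation.coeFn_coe,
      pderiv_iterate_expTerm, smul_smul, map_mul, map_pow, eval_X, mul_comm]

theorem applyDL_expTerm_of_isHomogeneous (w : Fin n → ℂ) {g : MvPolynomial (Fin n) ℂ} {d : ℕ}
    (hg : g.IsHomogeneous d) (m : ℕ) :
    applyDL g (expTerm w (m + d)) = eval w g • expTerm w m := by
  conv_lhs => rw [g.as_sum, ← applyDLAlgHom_apply, map_sum, LinearMap.sum_apply]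
  calc ∑ s ∈ g.support, applyDL (monomial s (coeff s g)) (expTerm w (m + d))
      = ∑ s ∈ g.support, eval w (monomial s (coeff s g)) • expTerm w m :=
        Finset.sum_congr rfl fun s hs => by
          rw [hg.degree_eq_sum_deg_support hs, ← Finsupp.degree_apply, applyDL_monomial_expTerm]
    _ = eval w g • expTerm w m := by rw [← Finset.sum_smul, ← map_sum, ← as_sum]

variable {ι : Type*} {g : ι → MvPolynomial (Fin n) ℂ}

theorem applyDL_apply_eq_zero_of_mem_span {u : MvPolynomial (Fin n) ℂ}
    (hu : u ∈ ⨅ i, LinearMap.ker (applyDL (g i))) {f : MvPolynomial (Fin n) ℂ}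
    (hf : f ∈ Ideal.span (Set.range g)) : applyDL f u = 0 := by
  rw [Submodule.mem_iInf] at hu
  induction hf using Submodule.span_induction with
  | mem x hx => obtain ⟨i, rfl⟩ := hx; exact hu i
  | zero => rw [← applyDLAlgHom_apply, map_zero, LinearMap.zero_apply]
  | add x y _ _ hx hy => rw [applyDL_add, LinearMap.add_apply, hx, hy, add_zero]
  | smul a x _ hx => rw [smul_eq_mul, applyDL_mul, Module.End.mul_apply, hx, map_zero]

theorem finiteDimensional_solutions_of_no_common_zero
    (hg : ∀ w : Fin n → ℂ, (∀ i, eval w (g i) = 0) → w = 0) :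
    FiniteDimensional ℂ ↥(⨅ i, LinearMap.ker (applyDL (g i))) := by
  obtain ⟨N, hN⟩ := exists_X_pow_mem_span_of_no_common_zero hg
  refine Submodule.finiteDimensional_of_le (S₂ := restrictDegree (Fin n) ℂ N) fun u hu =>
    mem_restrictDegree_of_pderiv_iterate_eq_zero fun j => ?_
  rw [← Derivation.coeFn_coe, ← Module.End.pow_apply, ← applyDL_X_pow]
  exact applyDL_apply_eq_zero_of_mem_span hu (hN j)

theorem no_common_zero_of_finiteDimensional_solutions [Finite ι] {d : ι → ℕ}
    (hg : ∀ i, (g i).IsHomogeneous (d i))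
    (hfin : FiniteDimensional ℂ ↥(⨅ i, LinearMap.ker (applyDL (g i)))) :
    ∀ w : Fin n → ℂ, (∀ i, eval w (g i) = 0) → w = 0 := by
  intro w hw
  by_contra hw0
  obtain ⟨B, hB⟩ := exists_le_restrictTotalDegree_of_fg
    ((Submodule.fg_iff_finiteDimensional _).mpr hfin)
  have := Fintype.ofFinite ι
  set D := ∑ i, d i
  have hsol : expTerm w (B + 1 + D) ∈ ⨅ i, LinearMap.ker (applyDL (g i)) := by
    refine Submodule.mem_iInf _ |>.mpr fun i => LinearMap.mem_ker.mpr ?_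
    have hdi : d i ≤ D := Finset.single_le_sum (fun _ _ => Nat.zero_le _) (Finset.mem_univ i)
    rw [show B + 1 + D = B + 1 + (D - d i) + d i by omega,
      applyDL_expTerm_of_isHomogeneous w (hg i), hw i, zero_smul]
  have hdeg := (mem_restrictTotalDegree _ _ _).mp (hB hsol)
  rw [totalDegree_expTerm hw0] at hdeg
  omega

end DifferentialOperators

theorem solutions_finiteDimensional_iff_no_common_zero_general {n k : ℕ}
    (g : Fin k → MvPolynomial (Fin n) ℂ) (d : Fin k → ℕ)
    (hg : ∀ i, (g i).IsHomogeneous (d i)) :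
    FiniteDimensional ℂ ↥(⨅ i, LinearMap.ker (applyDL (g i))) ↔
      ∀ w : Fin n → ℂ, (∀ i, MvPolynomial.eval w (g i) = 0) → w = 0 :=
  ⟨no_common_zero_of_finiteDimensional_solutions hg, finiteDimensional_solutions_of_no_common_zero⟩

/-- The space of polynomial solutions of the system `g_i(D)u = 0` is finite-dimensional iff
the `g_i` have no common zero other than the origin. -/
theorem solutions_finiteDimensional_iff_no_common_zero {n k : ℕ}
    (g : Fin k → MvPolynomial (Fin n) ℂ) (d : Fin k → ℕ) (hd : ∀ i, 1 ≤ d i)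
    (hg : ∀ i, (g i).IsHomogeneous (d i)) :
    FiniteDimensional ℂ ↥(⨅ i, LinearMap.ker (applyDL (g i))) ↔
      ∀ w : Fin n → ℂ, (∀ i, MvPolynomial.eval w (g i) = 0) → w = 0 :=
  solutions_finiteDimensional_iff_no_common_zero_general g d hg
end

section
/- Let P be a homogeneous polynomial of degree d ≥ 3 in C[z_1,...,z_n], and suppose: (a) every polynomial of the form Δ^m P^{m+1} (m ≥ 0) satisfies the system of PDEs (∂P/∂z_i)(D)u = 0 for i = 1,...,n and Δu = 0; and (b) the polynomials ∂P/∂z_1, ..., ∂P/∂z_n and σ_2(z) = Σ z_i² have no common zero other than the origin. Then Δ^m P^{m+1} = 0 for all sufficiently large m. -/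
/-!
The polynomials `f` with `f(D) u = 0` form an ideal, because `f ↦ f(D)` is an algebra map into
the (commuting) differential operators. For `u = Δ^m P^{m+1}` this ideal contains
`I = (σ₂, ∂P/∂z_1, …, ∂P/∂z_n)`, whose zero locus is `{0}` by (b); by the Nullstellensatz `I`
contains `z_i ^ N` for all `i` and some `N`, hence every monomial of degree `> n N`.
A homogeneous polynomial of degree `D` killed by all monomials of degree `D` is zero (Euler's
identity, by induction on `D`), while `Δ^m P^{m+1}` is homogeneous of degree `(d - 2) m + d`,
which exceeds `n N` for large `m` since `d ≥ 3`.
-/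

open MvPolynomial

/-- The iterated partial derivative `∂^{|s|}/∂z^s` given by the multi-index `s`. -/
noncomputable def mderiv {n : ℕ} (s : Fin n → ℕ) (g : MvPolynomial (Fin n) ℂ) :
    MvPolynomial (Fin n) ℂ :=
  (List.finRange n).foldr (fun i acc => (fun p => MvPolynomial.pderiv i p)^[s i] acc) g

/-- The differential operator `f(D)` applied to `g`: substitute `∂/∂z_i` for `z_i` in `f`. -/
noncomputable def applyD {n : ℕ} (f g : MvPolynomial (Fin n) ℂ) : MvPolynomial (Fin n) ℂ :=
  (AddMonoidAlgebra.coeff f).sum fun s c => c • mderiv (fun i => s i) g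


/-- The Laplace operator `Δ = ∑ ∂²/∂z_i²`. -/
noncomputable def lap {n : ℕ} (g : MvPolynomial (Fin n) ℂ) : MvPolynomial (Fin n) ℂ :=
  ∑ i, MvPolynomial.pderiv i (MvPolynomial.pderiv i g)

theorem List.prod_map_mul_of_commute {ι M : Type*} [Monoid M] (l : List ι) (f g : ι → M)
    (h : ∀ i j, Commute (g i) (f j)) :
    (l.map fun i => f i * g i).prod = (l.map f).prod * (l.map g).prod := by
  induction l with
  | nil => simp
  | cons a l ih =>
    have hc : Commute (g a) (l.map f).prod := Commute.list_prod_right _ _ fun x hx => by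
      obtain ⟨j, -, rfl⟩ := List.mem_map.1 hx
      exact h a j
    simp only [List.map_cons, List.prod_cons, ih, mul_assoc, hc.left_comm]

theorem List.prod_map_eq_apply_of_forall_ne {ι M : Type*} [Monoid M] {l : List ι} (hl : l.Nodup)
    {i : ι} (hi : i ∈ l) (f : ι → M) (hf : ∀ j ≠ i, f j = 1) : (l.map f).prod = f i := by
  obtain ⟨s, t, rfl⟩ := List.append_of_mem hi
  have hst : i ∉ s ++ t := (List.nodup_cons.1 (List.nodup_middle.1 hl)).1
  have hone : ∀ u : List ι, i ∉ u → (u.map f).prod = 1 := fun u hu =>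
    List.prod_eq_one fun x hx => by
      obtain ⟨j, hj, rfl⟩ := List.mem_map.1 hx
      exact hf j (ne_of_mem_of_not_mem hj hu)
  simp only [List.mem_append, not_or] at hst
  simp [hone s hst.1, hone t hst.2]

namespace MvPolynomial

theorem commute_pderiv {σ R : Type*} [CommRing R] (i j : σ) :
    Commute (pderiv (R := R) (σ := σ) i).toLinearMap (pderiv j).toLinearMap := by
  classical
  have h : ⁅pderiv (R := R) i, pderiv (R := R) j⁆ = 0 := derivation_ext fun k => by
    simp [Derivation.commutator_apply, pderiv_X, Pi.single_apply, apply_ite]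
  rw [commute_iff_lie_eq, ← Derivation.commutator_coe_linear_map, h]
  rfl

theorem monomial_mem_of_forall_X_pow_mem {σ R : Type*} [Fintype σ] [CommSemiring R]
    {I : Ideal (MvPolynomial σ R)} {N : ℕ} (hI : ∀ i, X i ^ N ∈ I) {s : σ →₀ ℕ}
    (hs : Fintype.card σ * N < s.degree) (a : R) : monomial s a ∈ I := by
  obtain ⟨i, hi⟩ : ∃ i, N ≤ s i := by
    by_contra! hlt
    have : s.degree ≤ Fintype.card σ * N := by
      rw [Finsupp.degree_eq_sum, ← smul_eq_mul, ← Finset.card_univ]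
      exact Finset.sum_le_card_nsmul _ _ _ fun i _ => (hlt i).le
    omega
  rw [← add_tsub_cancel_of_le (Finsupp.single_le_iff.2 hi), monomial_single_add]
  exact I.mul_mem_right _ (hI i)

theorem exists_X_pow_mem_of_zeroLocus_subset {σ k : Type*} [Fintype σ] [Field k] [IsAlgClosed k]
    {I : Ideal (MvPolynomial σ k)} (hI : zeroLocus k I ⊆ {0}) : ∃ N, ∀ i, X i ^ N ∈ I := by
  have hrad (i : σ) : X i ∈ I.radical := by
    rw [← vanishingIdeal_zeroLocus_eq_radical (K := k)]
    intro x hx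
    simp [Set.mem_singleton_iff.1 (hI hx)]
  choose c hc using hrad
  exact ⟨∑ i, c i, fun i => I.pow_mem_of_pow_mem (hc i)
    (Finset.single_le_sum (fun j _ => Nat.zero_le (c j)) (Finset.mem_univ i))⟩

end MvPolynomial

section

variable {n : ℕ}

noncomputable def mderivHom :
    Multiplicative (Fin n →₀ ℕ) →* Module.End ℂ (MvPolynomial (Fin n) ℂ) where
  toFun s := ((List.finRange n).map fun i => (pderiv i).toLinearMap ^ s.toAdd i).prod
  map_one' := by simp
  map_mul' s t := by
    simp only [toAdd_mul, Finsupp.add_apply, pow_add]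
    exact List.prod_map_mul_of_commute _ _ _ fun i j => ((commute_pderiv i j).pow_pow _ _)

theorem mderiv_eq_mderivHom (s : Fin n →₀ ℕ) (g : MvPolynomial (Fin n) ℂ) :
    mderiv (fun i => s i) g = mderivHom (.ofAdd s) g := by
  simp only [mderiv, mderivHom, MonoidHom.coe_mk, OneHom.coe_mk, toAdd_ofAdd]
  induction List.finRange n with
  | nil => rfl
  | cons i l ih => simp [ih, Module.End.pow_apply]

noncomputable def applyDAlgHom :
    MvPolynomial (Fin n) ℂ →ₐ[ℂ] Module.End ℂ (MvPolynomial (Fin n) ℂ) :=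
  AddMonoidAlgebra.lift ℂ _ _ mderivHom

theorem applyD_eq_applyDAlgHom (f g : MvPolynomial (Fin n) ℂ) :
    applyD f g = applyDAlgHom f g := by
  simp [applyD, applyDAlgHom, AddMonoidAlgebra.lift_apply, LinearMap.finsupp_sum_apply,
    mderiv_eq_mderivHom]

theorem applyDAlgHom_X (i : Fin n) : applyDAlgHom (X i) = (pderiv i).toLinearMap := by
  rw [X, ← single_eq_monomial, applyDAlgHom, AddMonoidAlgebra.lift_single, one_smul]
  refine (List.prod_map_eq_apply_of_forall_ne (List.nodup_finRange n) (List.mem_finRange i) _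
    fun j hj => by simp [Finsupp.single_eq_of_ne hj]).trans (by simp)

theorem lap_eq_applyDAlgHom (g : MvPolynomial (Fin n) ℂ) :
    lap g = applyDAlgHom (∑ i, X i ^ 2) g := by
  simp [lap, applyDAlgHom_X, pow_two, LinearMap.sum_apply]

namespace MvPolynomial

theorem IsHomogeneous.lap {g : MvPolynomial (Fin n) ℂ} {k : ℕ} (hg : g.IsHomogeneous k) :
    (_root_.lap g).IsHomogeneous (k - 2) :=
  IsHomogeneous.sum _ _ _ fun _ _ => hg.pderiv.pderiv

theorem IsHomogeneous.lap_iterate {g : MvPolynomial (Fin n) ℂ} {k : ℕ} (hg : g.IsHomogeneous k)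
    (m : ℕ) : (_root_.lap^[m] g).IsHomogeneous (k - 2 * m) := by
  induction m with
  | zero => simpa using hg
  | succ m ih =>
    rw [Function.iterate_succ_apply', mul_add_one, ← Nat.sub_sub]
    exact ih.lap

end MvPolynomial

noncomputable def diffAnnihilator (u : MvPolynomial (Fin n) ℂ) :
    Ideal (MvPolynomial (Fin n) ℂ) where
  carrier := {f | applyDAlgHom f u = 0}
  add_mem' hf hg := by simp_all
  zero_mem' := by simp
  smul_mem' r f hf := by simp_all [Module.End.mul_apply]

theorem mem_diffAnnihilator {u f : MvPolynomial (Fin n) ℂ} :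
    f ∈ diffAnnihilator u ↔ applyDAlgHom f u = 0 := Iff.rfl

theorem eq_zero_of_monomial_mem_diffAnnihilator {u : MvPolynomial (Fin n) ℂ} {D : ℕ}
    (hu : u.IsHomogeneous D)
    (h : ∀ s : Fin n →₀ ℕ, s.degree = D → monomial s 1 ∈ diffAnnihilator u) : u = 0 := by
  induction D generalizing u with
  | zero => simpa [mem_diffAnnihilator] using h 0 (map_zero _)
  | succ D ih =>
    have hpderiv (i : Fin n) : pderiv i u = 0 := ih hu.pderiv fun s hs => by
      have hmem := h (Finsupp.single i 1 + s) (by simp [hs, add_comm])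
      rwa [mem_diffAnnihilator, monomial_single_add, pow_one, mul_comm, map_mul,
        Module.End.mul_apply, applyDAlgHom_X] at hmem
    have euler := hu.sum_X_mul_pderiv
    simp only [hpderiv, mul_zero, Finset.sum_const_zero] at euler
    simpa [Nat.cast_add_one_ne_zero] using euler.symm

end

/-- If every `Δ^m P^{m+1}` solves the system `(∂P/∂z_i)(D)u = 0`, `Δu = 0`, and the partials
of `P` together with `σ₂ = ∑ z_i²` have no common zero besides the origin, then
`Δ^m P^{m+1} = 0` for all large `m`. -/
theorem vanishing_of_finite_dim_solutions {n d : ℕ} (hd : 3 ≤ d)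
    (P : MvPolynomial (Fin n) ℂ) (hP : P.IsHomogeneous d)
    (ha : ∀ m : ℕ,
      (∀ i, applyD (MvPolynomial.pderiv i P) (lap^[m] (P ^ (m + 1))) = 0) ∧
      lap (lap^[m] (P ^ (m + 1))) = 0)
    (hb : ∀ w : Fin n → ℂ,
      (∀ i, MvPolynomial.eval w (MvPolynomial.pderiv i P) = 0) → (∑ i, w i ^ 2) = 0 → w = 0) :
    ∃ N : ℕ, ∀ m > N, lap^[m] (P ^ (m + 1)) = 0 := by
  set I := Ideal.span (insert (∑ i, X i ^ 2) (Set.range fun i => pderiv i P))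
  have hann (m : ℕ) : I ≤ diffAnnihilator (lap^[m] (P ^ (m + 1))) := by
    refine Ideal.span_le.2 ?_
    rintro _ (rfl | ⟨i, rfl⟩)
    · exact (lap_eq_applyDAlgHom _).symm.trans (ha m).2
    · exact (applyD_eq_applyDAlgHom _ _).symm.trans ((ha m).1 i)
  have hzero : zeroLocus ℂ I ⊆ {0} := by
    rw [zeroLocus_span]
    rintro w hw
    exact hb w (fun i => by simpa using hw _ (Set.mem_insert_of_mem _ ⟨i, rfl⟩))
      (by simpa using hw _ (Set.mem_insert _ _))
  obtain ⟨N, hN⟩ := exists_X_pow_mem_of_zeroLocus_subset hzero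
  refine ⟨n * N, fun m hm => eq_zero_of_monomial_mem_diffAnnihilator
    ((hP.pow (m + 1)).lap_iterate m) fun s hs => hann m ?_⟩
  refine monomial_mem_of_forall_X_pow_mem hN ?_ 1
  have hdm : 3 * (m + 1) ≤ d * (m + 1) := Nat.mul_le_mul_right (m + 1) hd
  rw [hs, Fintype.card_fin]
  omega
end

section
/- Let P ∈ C[z_1,...,z_n] be a polynomial such that Δ^m P^{m+a} = 0 for all sufficiently large m, uniformly for each fixed a ≥ 1 (i.e., for each a ≥ 1 there exists N_a with Δ^m P^{m+a} = 0 for m > N_a), and Δ^m P^m = 0 for all m ≥ 1. Then for any polynomial f of degree d there exists M such that Δ^m (f · P^m) = 0 for all m > M. -/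
/-!
Iterating the Leibniz rule `Δ(uv) = Δu·v + u·Δv + 2 ∑ᵢ ∂ᵢu ∂ᵢv` shows that `Δ^m (f g)` vanishes as
soon as, for every split `k₁ + |L| + k₃ = m` with `L` a list of coordinates, one of
`∂_L Δ^{k₁} f` and `∂_L Δ^{k₃} g` vanishes. For `g = P^m` the first one vanishes when
`2k₁ + |L| > deg f`; otherwise `b = k₁ + |L| ≤ deg f` and `Δ^{k₃} P^m = Δ^{k₃} P^{k₃ + b}` vanishes
once `k₃ = m - b` exceeds `N_b`, which holds for `m > deg f + max_{b ≤ deg f} N_b`.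
-/

open MvPolynomial

namespace MvPolynomial

section CommSemiring

variable {σ R : Type*} [CommSemiring R]

noncomputable def iteratedPDeriv (L : List σ) : Module.End R (MvPolynomial σ R) :=
  (L.map fun i => (pderiv i).toLinearMap).prod

@[simp]
theorem iteratedPDeriv_nil (p : MvPolynomial σ R) : iteratedPDeriv [] p = p := rfl

@[simp]
theorem iteratedPDeriv_cons (i : σ) (L : List σ) (p : MvPolynomial σ R) :
    iteratedPDeriv (i :: L) p = pderiv i (iteratedPDeriv L p) := rfl

theorem totalDegree_pderiv_le (i : σ) (p : MvPolynomial σ R) :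
    (pderiv i p).totalDegree ≤ p.totalDegree - 1 := by
  classical
  refine Finset.sup_le fun s hs => ?_
  have hcoeff : coeff (s + Finsupp.single i 1) p ≠ 0 := by
    rw [mem_support_iff, coeff_pderiv] at hs
    exact left_ne_zero_of_mul hs
  have := le_totalDegree (mem_support_iff.mpr hcoeff)
  rw [Finsupp.sum_add_index' (fun _ => rfl) (fun _ _ _ => rfl), Finsupp.sum_single_index rfl] at this
  omega

theorem totalDegree_iteratedPDeriv_le (L : List σ) (p : MvPolynomial σ R) :
    (iteratedPDeriv L p).totalDegree ≤ p.totalDegree - L.length := by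
  induction L with
  | nil => simp
  | cons i L ih =>
    have := totalDegree_pderiv_le i (iteratedPDeriv L p)
    rw [iteratedPDeriv_cons, List.length_cons]
    omega

theorem iteratedPDeriv_eq_zero_of_totalDegree_lt {L : List σ} {p : MvPolynomial σ R}
    (h : p.totalDegree < L.length) : iteratedPDeriv L p = 0 := by
  obtain _ | ⟨i, L⟩ := L
  · simp at h
  · have hdeg := totalDegree_iteratedPDeriv_le L p
    rw [List.length_cons] at h
    have hconst : (iteratedPDeriv L p).totalDegree = 0 := by omega
    rw [iteratedPDeriv_cons, totalDegree_eq_zero_iff_eq_C.mp hconst, pderiv_C]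

end CommSemiring

section CommRing

variable {σ R : Type*} [CommRing R]

theorem pderiv_comm (i j : σ) (p : MvPolynomial σ R) :
    pderiv i (pderiv j p) = pderiv j (pderiv i p) := by
  classical
  -- the commutator is a derivation vanishing on every variable
  have : ⁅pderiv (R := R) i, pderiv (R := R) j⁆ = 0 := by
    refine derivation_ext fun k => ?_
    simp [Derivation.commutator_apply, pderiv_X, Pi.single_apply, apply_ite]
  simpa [Derivation.commutator_apply, sub_eq_zero] using congr($this p)

theorem pderiv_iteratedPDeriv (i : σ) (L : List σ) (p : MvPolynomial σ R) :
    pderiv i (iteratedPDeriv L p) = iteratedPDeriv L (pderiv i p) := by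
  induction L with
  | nil => rfl
  | cons j L ih => rw [iteratedPDeriv_cons, iteratedPDeriv_cons, pderiv_comm, ih]

end CommRing

end MvPolynomial

section Laplacian

variable {n : ℕ}

noncomputable def lapEnd : Module.End ℂ (MvPolynomial (Fin n) ℂ) :=
  ∑ i, (pderiv i).toLinearMap * (pderiv i).toLinearMap

theorem lap_iterate_eq_pow_apply (m : ℕ) (p : MvPolynomial (Fin n) ℂ) :
    lap^[m] p = (lapEnd ^ m) p := by
  have : ⇑(lapEnd (n := n)) = lap := by
    ext1 q
    simp [lapEnd, lap]
  rw [Module.End.pow_apply, this]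

theorem lap_mul (u v : MvPolynomial (Fin n) ℂ) :
    lap (u * v) = lap u * v + u * lap v + 2 • ∑ i, pderiv i u * pderiv i v := by
  simp only [lap, pderiv_mul, map_add, Finset.sum_add_distrib, Finset.sum_mul, Finset.mul_sum,
    Finset.smul_sum, two_nsmul]
  ring

theorem pderiv_lap (i : Fin n) (p : MvPolynomial (Fin n) ℂ) :
    pderiv i (lap p) = lap (pderiv i p) := by
  simp only [lap, map_sum, pderiv_comm i]

theorem pderiv_lap_iterate (i : Fin n) (k : ℕ) (p : MvPolynomial (Fin n) ℂ) :
    pderiv i (lap^[k] p) = lap^[k] (pderiv i p) :=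
  Function.Commute.iterate_right (pderiv_lap i) k p

theorem iteratedPDeriv_lap (L : List (Fin n)) (p : MvPolynomial (Fin n) ℂ) :
    iteratedPDeriv L (lap p) = ∑ i, iteratedPDeriv (i :: i :: L) p := by
  simp only [lap, map_sum, iteratedPDeriv_cons, pderiv_iteratedPDeriv]

theorem iteratedPDeriv_lap_iterate_eq_zero {k : ℕ} {L : List (Fin n)}
    {f : MvPolynomial (Fin n) ℂ} (h : f.totalDegree < 2 * k + L.length) :
    iteratedPDeriv L (lap^[k] f) = 0 := by
  induction k generalizing L with
  | zero => exact iteratedPDeriv_eq_zero_of_totalDegree_lt (by simpa using h)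
  | succ k ih =>
    rw [Function.iterate_succ_apply', iteratedPDeriv_lap]
    exact Finset.sum_eq_zero fun i _ => ih (by simp only [List.length_cons]; omega)

theorem lap_iterate_mul_eq_zero {m : ℕ} {f g : MvPolynomial (Fin n) ℂ}
    (h : ∀ k₁ k₃ (L : List (Fin n)), k₁ + L.length + k₃ = m →
      iteratedPDeriv L (lap^[k₁] f) = 0 ∨ iteratedPDeriv L (lap^[k₃] g) = 0) :
    lap^[m] (f * g) = 0 := by
  induction m generalizing f g with
  | zero => obtain h0 | h0 := h 0 0 [] rfl <;> simp_all
  | succ m ih =>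
    have hlap_f : lap^[m] (lap f * g) = 0 := ih fun k₁ k₃ L hk => by
      simpa only [Function.iterate_succ_apply] using h (k₁ + 1) k₃ L (by omega)
    have hlap_g : lap^[m] (f * lap g) = 0 := ih fun k₁ k₃ L hk => by
      simpa only [Function.iterate_succ_apply] using h k₁ (k₃ + 1) L (by omega)
    have hpderiv (i : Fin n) : lap^[m] (pderiv i f * pderiv i g) = 0 := ih fun k₁ k₃ L hk => by
      simpa only [← pderiv_lap_iterate, ← pderiv_iteratedPDeriv, iteratedPDeriv_cons]
        using h k₁ k₃ (i :: L) (by rw [List.length_cons]; omega)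
    rw [Function.iterate_succ_apply, lap_mul, lap_iterate_eq_pow_apply]
    simp only [map_add, map_nsmul, map_sum, ← lap_iterate_eq_pow_apply, hlap_f, hlap_g, hpderiv,
      Finset.sum_const_zero, smul_zero, add_zero]

end Laplacian

theorem exists_lap_iterate_pow_add_eq_zero {n : ℕ} (P : MvPolynomial (Fin n) ℂ)
    (h1 : ∀ a : ℕ, 1 ≤ a → ∃ N : ℕ, ∀ m > N, lap^[m] (P ^ (m + a)) = 0)
    (h2 : ∀ m : ℕ, 1 ≤ m → lap^[m] (P ^ m) = 0) (d : ℕ) :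
    ∃ N : ℕ, ∀ a ≤ d, ∀ k > N, lap^[k] (P ^ (k + a)) = 0 := by
  choose N hN using fun a : ℕ => h1 (a + 1) a.succ_pos
  refine ⟨(Finset.range d).sup N, fun a ha k hk => ?_⟩
  obtain _ | a := a
  · exact h2 k (by omega)
  · exact hN a k (lt_of_le_of_lt (Finset.le_sup (Finset.mem_range.mpr (by omega))) hk)

/-- If `Δ^m P^{m+a} = 0` for `m >> 0` for each fixed `a ≥ 1`, and `Δ^m P^m = 0` for all
`m ≥ 1`, then for any polynomial `f` we have `Δ^m (f P^m) = 0` for `m >> 0`. -/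
theorem vanishing_with_factor {n : ℕ} (P : MvPolynomial (Fin n) ℂ)
    (h1 : ∀ a : ℕ, 1 ≤ a → ∃ N : ℕ, ∀ m > N, lap^[m] (P ^ (m + a)) = 0)
    (h2 : ∀ m : ℕ, 1 ≤ m → lap^[m] (P ^ m) = 0) :
    ∀ f : MvPolynomial (Fin n) ℂ, ∃ M : ℕ, ∀ m > M, lap^[m] (f * P ^ m) = 0 := by
  intro f
  obtain ⟨N, hN⟩ := exists_lap_iterate_pow_add_eq_zero P h1 h2 f.totalDegree
  refine ⟨f.totalDegree + N, fun m hm => lap_iterate_mul_eq_zero fun k₁ k₃ L hk => ?_⟩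
  by_cases hdeg : f.totalDegree < 2 * k₁ + L.length
  · exact .inl (iteratedPDeriv_lap_iterate_eq_zero hdeg)
  · have hpow : P ^ m = P ^ (k₃ + (k₁ + L.length)) := by rw [← hk]; ring
    right
    rw [hpow, hN _ (by omega) k₃ (by omega), map_zero]
end
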